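/- arXiv:1802.03338 — 3 statements merged into one kernel-verified Lean document; each statement's English description precedes it below -/
import Mathlib

section
/- Let w₁(x) = |x|^{-n} and w₂(x) ≡ 1 on ℝⁿ. Then the pair (w₁, w₂) belongs to the bilinear Muckenhoupt class A_{(1,1)}, even though w₁ is not locally integrable on ℝⁿ (hence w₁ ∉ A₁). -/
open MeasureTheory ENNReal

noncomputable section

/-- Points of `ℝⁿ`. -/
abbrev Xs (n : ℕ) := Fin n → ℝ

/-- The axis-parallel cube with "lower-left" corner `c` and side length `l`. -/
def Cube {n : ℕ} (c : Xs n) (l : ℝ) : Set (Xs n) := Set.Icc c (fun i => c i + l)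

/-- Average `⨍_Q f dμ` of an `ℝ≥0∞`-valued function. -/
def avg {n : ℕ} (μ : Measure (Xs n)) (Q : Set (Xs n)) (f : Xs n → ℝ≥0∞) : ℝ≥0∞ :=
  (μ Q)⁻¹ * ∫⁻ x in Q, f x ∂μ

/-- The Muckenhoupt `A_q(μ)` constant of a weight `v` (with the `A₁` convention
using the essential supremum when `q = 1`). -/
def AConst {n : ℕ} (μ : Measure (Xs n)) (v : Xs n → ℝ≥0∞) (q : ℝ) : ℝ≥0∞ :=
  ⨆ (c : Xs n) (l : ℝ) (_ : 0 < l),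
    avg μ (Cube c l) v *
      (if q = 1 then essSup (fun x => (v x)⁻¹) (μ.restrict (Cube c l))
       else (avg μ (Cube c l) (fun x => v x ^ (-(q - 1)⁻¹))) ^ (q - 1))

/-! The geometric mean of the two weights is `|x|^{-n/2}`, which is integrable near the origin,
and by scaling its integral over a ball of radius `R` is a constant times `R^{n/2}`. A cube `Q` of
side `l` whose distance to the origin is `O(l)` lies in a ball of radius `O(l)`, so
`(⨍_Q |x|^{-n/2})² = O(l^{-n})` while `sup_Q |x|^n = O(l^n)`. On a cube far from the origin `|x|`
is comparable to a constant on `Q`, and the two factors cancel. On the other hand `|x|^{-n}` has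
infinite integral over every ball around the origin (in polar coordinates it becomes `∫₀ dr/r`),
which gives the other two claims. -/

open Metric

theorem rpow_neg_half_sq {a : ℝ} (ha : 0 ≤ a) (d : ℕ) : (a ^ (-(d / 2 : ℝ))) ^ 2 = (a ^ d)⁻¹ := by
  rw [← Real.rpow_mul_natCast ha, show -(d / 2 : ℝ) * (2 : ℕ) = -d by push_cast; ring,
    Real.rpow_neg ha, Real.rpow_natCast]

theorem essSup_ne_zero_of_forall_ne_zero {α : Type*} [MeasurableSpace α] {μ : Measure α}
    (hμ : μ ≠ 0) {f : α → ℝ≥0∞} (hf : ∀ x, f x ≠ 0) : essSup f μ ≠ 0 := fun h =>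
  hμ (ae_eq_bot.1 (Filter.eventually_false_iff_eq_bot.1
    ((essSup_eq_zero_iff.1 h).mono fun x hx => hf x hx)))

section NormRpow

variable {E : Type*} [NormedAddCommGroup E] [NormedSpace ℝ E] [MeasurableSpace E] (μ : Measure E)

theorem sq_setLAverage_norm_rpow_mul_le_of_far {S : Set E} (hSm : MeasurableSet S) {x₀ : E}
    {D : ℝ} (hD : 0 ≤ D) (hS : S ⊆ closedBall x₀ D) (hfar : 2 * D < ‖x₀‖) :
    (⨍⁻ x in S, ENNReal.ofReal (‖x‖ ^ (-(Module.finrank ℝ E / 2 : ℝ))) ∂μ) ^ 2 *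
        ENNReal.ofReal ((‖x₀‖ + D) ^ Module.finrank ℝ E) ≤
      ENNReal.ofReal (3 ^ Module.finrank ℝ E) := by
  set d := Module.finrank ℝ E
  set r := ‖x₀‖
  have hr : 0 < r := by linarith
  have hlow : ∀ x ∈ S, ENNReal.ofReal (‖x‖ ^ (-(d / 2 : ℝ))) ≤
      ENNReal.ofReal ((r / 2) ^ (-(d / 2 : ℝ))) := by
    intro x hx
    have hxx₀ : ‖x₀ - x‖ ≤ D := by rw [norm_sub_rev]; exact mem_closedBall_iff_norm.1 (hS hx)
    have : r / 2 ≤ ‖x‖ := by linarith [norm_le_insert' x₀ x]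
    exact ENNReal.ofReal_le_ofReal
      (Real.rpow_le_rpow_of_nonpos (by positivity) this (neg_nonpos.2 (by positivity)))
  have havg : ⨍⁻ x in S, ENNReal.ofReal (‖x‖ ^ (-(d / 2 : ℝ))) ∂μ ≤
      ENNReal.ofReal ((r / 2) ^ (-(d / 2 : ℝ))) := by
    rw [setLAverage_eq]
    refine ENNReal.div_le_of_le_mul ?_
    calc ∫⁻ x in S, ENNReal.ofReal (‖x‖ ^ (-(d / 2 : ℝ))) ∂μ
        ≤ ∫⁻ _ in S, ENNReal.ofReal ((r / 2) ^ (-(d / 2 : ℝ))) ∂μ := setLIntegral_mono' hSm hlow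
      _ = _ := setLIntegral_const _ _
  calc (⨍⁻ x in S, ENNReal.ofReal (‖x‖ ^ (-(d / 2 : ℝ))) ∂μ) ^ 2 * ENNReal.ofReal ((r + D) ^ d)
      ≤ ENNReal.ofReal ((r / 2) ^ (-(d / 2 : ℝ))) ^ 2 * ENNReal.ofReal ((3 * (r / 2)) ^ d) := by
        gcongr
        linarith
    _ = ENNReal.ofReal (3 ^ d) := by
        rw [← ENNReal.ofReal_pow (by positivity), ← ENNReal.ofReal_mul (by positivity),
          rpow_neg_half_sq (by positivity)]
        congr 1
        field_simp
        rw [← mul_pow]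
        ring_nf

variable [BorelSpace E] [FiniteDimensional ℝ E] [μ.IsAddHaarMeasure]

theorem lintegral_ball_norm_rpow (s : ℝ) {R : ℝ} (hR : 0 < R) :
    ∫⁻ x in ball 0 R, ENNReal.ofReal (‖x‖ ^ s) ∂μ =
      ENNReal.ofReal (R ^ (s + Module.finrank ℝ E)) *
        ∫⁻ x in ball 0 1, ENNReal.ofReal (‖x‖ ^ s) ∂μ := by
  have hF : ∀ y : E, (ball (0 : E) R).indicator (fun x => ENNReal.ofReal (‖x‖ ^ s)) (R • y) =
      (ball (0 : E) 1).indicator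
        (fun y => ENNReal.ofReal (R ^ s) * ENNReal.ofReal (‖y‖ ^ s)) y := by
    intro y
    have hmem : R • y ∈ ball (0 : E) R ↔ y ∈ ball (0 : E) 1 := by
      simp [norm_smul, abs_of_pos hR, hR]
    by_cases hy : y ∈ ball (0 : E) 1
    · rw [Set.indicator_of_mem (hmem.2 hy), Set.indicator_of_mem hy, norm_smul,
        Real.norm_of_nonneg hR.le, Real.mul_rpow hR.le (norm_nonneg y),
        ENNReal.ofReal_mul (by positivity)]
    · rw [Set.indicator_of_notMem (mt hmem.1 hy), Set.indicator_of_notMem hy]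
  have hscale := lintegral_map_equiv ((ball (0 : E) R).indicator fun x => ENNReal.ofReal (‖x‖ ^ s))
    (MeasurableEquiv.smul₀ R hR.ne' : E ≃ᵐ E) (μ := μ)
  simp only [MeasurableEquiv.coe_smul₀, Measure.map_addHaar_smul μ hR.ne',
    lintegral_smul_measure, hF] at hscale
  rw [lintegral_indicator measurableSet_ball, lintegral_indicator measurableSet_ball,
    lintegral_const_mul' _ _ ofReal_ne_top, abs_of_pos (by positivity), smul_eq_mul] at hscale
  have hRd : ENNReal.ofReal (R ^ Module.finrank ℝ E) *
      ENNReal.ofReal ((R ^ Module.finrank ℝ E)⁻¹) = 1 := by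
    rw [← ENNReal.ofReal_mul (by positivity), mul_inv_cancel₀ (by positivity), ENNReal.ofReal_one]
  calc ∫⁻ x in ball 0 R, ENNReal.ofReal (‖x‖ ^ s) ∂μ
      = ENNReal.ofReal (R ^ Module.finrank ℝ E) * (ENNReal.ofReal ((R ^ Module.finrank ℝ E)⁻¹) *
          ∫⁻ x in ball 0 R, ENNReal.ofReal (‖x‖ ^ s) ∂μ) := by rw [← mul_assoc, hRd, one_mul]
    _ = _ := by
      rw [hscale, ← mul_assoc, ← ENNReal.ofReal_mul (by positivity), ← Real.rpow_natCast,
        ← Real.rpow_add hR, add_comm]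

theorem lintegral_ball_norm_rpow_lt_top_iff [Nontrivial E] {s r : ℝ} (hr : 0 < r) :
    ∫⁻ x in ball 0 r, ENNReal.ofReal (‖x‖ ^ s) ∂μ < ⊤ ↔ -(Module.finrank ℝ E : ℝ) < s := by
  have hint : IntegrableOn (fun x : E => ‖x‖ ^ s) (ball 0 r) μ ↔
      ∫⁻ x in ball 0 r, ENNReal.ofReal (‖x‖ ^ s) ∂μ < ⊤ :=
    ⟨Integrable.lintegral_lt_top, fun h => ⟨(measurable_norm.pow_const s).aestronglyMeasurable,
      (hasFiniteIntegral_iff_ofReal (.of_forall fun x => by positivity)).2 h⟩⟩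
  have hd : 1 ≤ Module.finrank ℝ E := Module.finrank_pos
  rw [← hint, integrableOn_fun_norm_addHaar μ (f := fun y => y ^ s),
    integrableOn_congr_fun (g := fun y => y ^ (s + (Module.finrank ℝ E - 1 : ℕ))) ?_
      measurableSet_Ioo, intervalIntegral.integrableOn_Ioo_rpow_iff hr, Nat.cast_sub hd]
  · constructor <;> intro h <;> push_cast at * <;> linarith
  · intro y hy
    simp only [smul_eq_mul]
    rw [Real.rpow_add hy.1, Real.rpow_natCast, mul_comm]

theorem sq_setLAverage_norm_rpow_mul_le_of_near {S : Set E} {x₀ : E}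
    {D κ : ℝ} (hD : 0 < D) (hκ : 0 < κ) (hS : S ⊆ closedBall x₀ D)
    (hvol : ENNReal.ofReal (κ * D ^ Module.finrank ℝ E) ≤ μ S) (hnear : ‖x₀‖ ≤ 2 * D) :
    (⨍⁻ x in S, ENNReal.ofReal (‖x‖ ^ (-(Module.finrank ℝ E / 2 : ℝ))) ∂μ) ^ 2 *
        ENNReal.ofReal ((‖x₀‖ + D) ^ Module.finrank ℝ E) ≤
      ENNReal.ofReal (12 ^ Module.finrank ℝ E / κ ^ 2) *
        (∫⁻ x in ball 0 1, ENNReal.ofReal (‖x‖ ^ (-(Module.finrank ℝ E / 2 : ℝ))) ∂μ) ^ 2 := by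
  set d := Module.finrank ℝ E
  set C := ∫⁻ x in ball 0 1, ENNReal.ofReal (‖x‖ ^ (-(d / 2 : ℝ))) ∂μ
  set u : ℝ := (4 * D) ^ (-(d / 2 : ℝ) + d) / (κ * D ^ d)
  have hball : S ⊆ ball 0 (4 * D) := fun x hx => by
    have := norm_le_insert' x x₀
    rw [mem_ball_zero_iff]
    linarith [mem_closedBall_iff_norm.1 (hS hx)]
  have havg : ⨍⁻ x in S, ENNReal.ofReal (‖x‖ ^ (-(d / 2 : ℝ))) ∂μ ≤ ENNReal.ofReal u * C := by
    rw [setLAverage_eq, ENNReal.ofReal_div_of_pos (by positivity), ← ENNReal.mul_div_right_comm]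
    refine ENNReal.div_le_div ?_ hvol
    rw [← lintegral_ball_norm_rpow μ _ (by positivity)]
    exact lintegral_mono_set hball
  have hu : u ^ 2 * (3 * D) ^ d = 12 ^ d / κ ^ 2 := by
    rw [div_pow, ← Real.rpow_mul_natCast (by positivity),
      show (-(d / 2 : ℝ) + d) * (2 : ℕ) = d by push_cast; ring, Real.rpow_natCast]
    field_simp
    rw [show (12 : ℝ) ^ d = 4 ^ d * 3 ^ d by rw [← mul_pow]; norm_num]
    ring
  calc (⨍⁻ x in S, ENNReal.ofReal (‖x‖ ^ (-(d / 2 : ℝ))) ∂μ) ^ 2 *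
        ENNReal.ofReal ((‖x₀‖ + D) ^ d)
      ≤ (ENNReal.ofReal u * C) ^ 2 * ENNReal.ofReal ((3 * D) ^ d) := by
        gcongr
        linarith
    _ = ENNReal.ofReal (12 ^ d / κ ^ 2) * C ^ 2 := by
        rw [← hu, mul_pow, ENNReal.ofReal_mul (by positivity),
          ← ENNReal.ofReal_pow (by positivity : (0 : ℝ) ≤ u)]
        ring


theorem sq_setLAverage_norm_rpow_mul_le {S : Set E} (hSm : MeasurableSet S)
    {x₀ : E} {D κ : ℝ} (hD : 0 < D) (hκ : 0 < κ) (hS : S ⊆ closedBall x₀ D)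
    (hvol : ENNReal.ofReal (κ * D ^ Module.finrank ℝ E) ≤ μ S) :
    (⨍⁻ x in S, ENNReal.ofReal (‖x‖ ^ (-(Module.finrank ℝ E / 2 : ℝ))) ∂μ) ^ 2 *
        ENNReal.ofReal ((‖x₀‖ + D) ^ Module.finrank ℝ E) ≤
      ENNReal.ofReal (12 ^ Module.finrank ℝ E / κ ^ 2) *
          (∫⁻ x in ball 0 1, ENNReal.ofReal (‖x‖ ^ (-(Module.finrank ℝ E / 2 : ℝ))) ∂μ) ^ 2 +
        ENNReal.ofReal (3 ^ Module.finrank ℝ E) := by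
  rcases le_or_gt ‖x₀‖ (2 * D) with hnear | hfar
  · exact (sq_setLAverage_norm_rpow_mul_le_of_near μ hD hκ hS hvol hnear).trans le_self_add
  · exact (sq_setLAverage_norm_rpow_mul_le_of_far μ hSm hD.le hS hfar).trans le_add_self

end NormRpow

section EuclideanCube

variable {n : ℕ}

-- `Xs n` carries the sup norm; the Euclidean norm of the statement is that of `EuclideanSpace`.
theorem sqrt_sum_sq_eq_norm_toLp (x : Xs n) :
    Real.sqrt (∑ i, x i ^ 2) = ‖WithLp.toLp 2 x‖ := by
  simp [EuclideanSpace.norm_eq, sq_abs]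

theorem setLIntegral_comp_norm_toLp (Q : Set (Xs n)) (g : ℝ → ℝ≥0∞) :
    ∫⁻ x in Q, g ‖WithLp.toLp 2 x‖ =
      ∫⁻ y in WithLp.ofLp ⁻¹' Q, g ‖y‖ ∂(volume : Measure (EuclideanSpace ℝ (Fin n))) :=
  (PiLp.volume_preserving_toLp (Fin n)).setLIntegral_comp_preimage_emb
    (MeasurableEquiv.toLp 2 (Xs n)).measurableEmbedding (fun y => g ‖y‖) (WithLp.ofLp ⁻¹' Q)

theorem avg_comp_norm_toLp {Q : Set (Xs n)} (hQ : MeasurableSet Q) (g : ℝ → ℝ≥0∞) :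
    avg volume Q (fun x => g ‖WithLp.toLp 2 x‖) =
      ⨍⁻ y in WithLp.ofLp ⁻¹' Q, g ‖y‖ ∂(volume : Measure (EuclideanSpace ℝ (Fin n))) := by
  rw [avg, setLAverage_eq, setLIntegral_comp_norm_toLp,
    (PiLp.volume_preserving_ofLp (Fin n)).measure_preimage hQ.nullMeasurableSet,
    ENNReal.div_eq_inv_mul]

theorem measurableSet_cube (c : Xs n) (l : ℝ) : MeasurableSet (Cube c l) := measurableSet_Icc

theorem isCompact_cube (c : Xs n) (l : ℝ) : IsCompact (Cube c l) := isCompact_Icc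

theorem volume_cube (c : Xs n) (l : ℝ) : volume (Cube c l) = ENNReal.ofReal l ^ n := by
  simp [Cube, Real.volume_Icc_pi]

theorem preimage_cube_subset_closedBall (c : Xs n) {l : ℝ} (hl : 0 ≤ l) :
    WithLp.ofLp ⁻¹' Cube c l ⊆ closedBall (WithLp.toLp 2 c) (Real.sqrt n * l) := by
  intro y hy
  rw [mem_closedBall_iff_norm, EuclideanSpace.norm_eq, ← Real.sqrt_sq hl,
    ← Real.sqrt_mul' _ (sq_nonneg l)]
  refine Real.sqrt_le_sqrt ?_
  calc ∑ i, ‖(y - WithLp.toLp 2 c).ofLp i‖ ^ 2 ≤ ∑ _i : Fin n, l ^ 2 := by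
        refine Finset.sum_le_sum fun i _ => ?_
        have h1 : c i ≤ y.ofLp i := hy.1 i
        have h2 : y.ofLp i ≤ c i + l := hy.2 i
        simp only [WithLp.ofLp_sub, Pi.sub_apply, Real.norm_eq_abs, sq_abs]
        nlinarith
    _ = n * l ^ 2 := by simp

theorem ball_subset_preimage_cube :
    ball (0 : EuclideanSpace ℝ (Fin n)) 1 ⊆ WithLp.ofLp ⁻¹' Cube (-1) 2 := by
  intro y hy
  have hle : ∀ i, |y.ofLp i| < 1 := fun i =>
    (PiLp.norm_apply_le y i).trans_lt (mem_ball_zero_iff.1 hy)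
  constructor <;> intro i <;> simp only [Pi.neg_apply, Pi.one_apply] <;>
    linarith [(abs_lt.1 (hle i)).1, (abs_lt.1 (hle i)).2]

end EuclideanCube

section PowerWeight

variable {n : ℕ}

theorem essSup_inv_ofReal_norm_toLp_rpow_neg_le (hn : 0 < n) (c : Xs n) {l : ℝ} (hl : 0 ≤ l) :
    essSup (fun x => (ENNReal.ofReal (‖WithLp.toLp 2 x‖ ^ (-(n : ℝ))))⁻¹)
        (volume.restrict (Cube c l)) ≤
      ENNReal.ofReal ((‖WithLp.toLp 2 c‖ + Real.sqrt n * l) ^ n) := by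
  have : NeZero n := ⟨hn.ne'⟩
  refine essSup_le_of_ae_le _ ?_
  filter_upwards [ae_restrict_mem (measurableSet_cube c l),
    ae_restrict_of_ae (volume.ae_ne (0 : Xs n))]
    with x hxQ hx0
  have hpos : 0 < ‖WithLp.toLp 2 x‖ := norm_pos_iff.2 (by simpa using hx0)
  have hle : ‖WithLp.toLp 2 x‖ ≤ ‖WithLp.toLp 2 c‖ + Real.sqrt n * l := by
    have := mem_closedBall_iff_norm.1 (preimage_cube_subset_closedBall c hl hxQ)
    linarith [norm_le_insert' (WithLp.toLp 2 x) (WithLp.toLp 2 c)]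
  rw [← ENNReal.ofReal_inv_of_pos (by positivity), Real.rpow_neg hpos.le, inv_inv,
    Real.rpow_natCast]
  exact ENNReal.ofReal_le_ofReal (pow_le_pow_left₀ hpos.le hle n)

theorem exists_avg_cube_sq_mul_essSup_le (hn : 0 < n) :
    ∃ K < ⊤, ∀ (c : Xs n) (l : ℝ), 0 < l →
      avg volume (Cube c l) (fun x => ENNReal.ofReal (‖WithLp.toLp 2 x‖ ^ (-(n / 2 : ℝ)))) ^ 2 *
        essSup (fun x => (ENNReal.ofReal (‖WithLp.toLp 2 x‖ ^ (-(n : ℝ))))⁻¹)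
          (volume.restrict (Cube c l)) ≤ K := by
  have : NeZero n := ⟨hn.ne'⟩
  set κ : ℝ := (Real.sqrt n ^ n)⁻¹
  have hκ : 0 < κ := by positivity
  set C := ∫⁻ y in ball (0 : EuclideanSpace ℝ (Fin n)) 1, ENNReal.ofReal (‖y‖ ^ (-(n / 2 : ℝ)))
  have hC : C ≠ ⊤ := by
    refine ((lintegral_ball_norm_rpow_lt_top_iff volume one_pos).2 ?_).ne
    rw [finrank_euclideanSpace_fin]
    have : (0 : ℝ) < n := by exact_mod_cast hn
    linarith
  refine ⟨ENNReal.ofReal (12 ^ n / κ ^ 2) * C ^ 2 + ENNReal.ofReal (3 ^ n), by finiteness,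
    fun c l hl => ?_⟩
  have hvol : ENNReal.ofReal (κ * (Real.sqrt n * l) ^ n) ≤
      volume (WithLp.ofLp ⁻¹' Cube c l : Set (EuclideanSpace ℝ (Fin n))) := by
    rw [(PiLp.volume_preserving_ofLp (Fin n)).measure_preimage
        (measurableSet_cube c l).nullMeasurableSet,
      volume_cube, ← ENNReal.ofReal_pow hl.le, mul_pow, inv_mul_cancel_left₀ (by positivity)]
  have key := sq_setLAverage_norm_rpow_mul_le volume
    ((measurableSet_cube c l).preimage (PiLp.volume_preserving_ofLp (Fin n)).measurable)
    (by positivity) hκ (preimage_cube_subset_closedBall c hl.le)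
    (by rwa [finrank_euclideanSpace_fin])
  rw [finrank_euclideanSpace_fin] at key
  rw [avg_comp_norm_toLp (measurableSet_cube c l) fun t => ENNReal.ofReal (t ^ (-(n / 2 : ℝ)))]
  exact (mul_le_mul_right (essSup_inv_ofReal_norm_toLp_rpow_neg_le hn c hl.le) _).trans key

theorem lintegral_cube_norm_toLp_rpow_neg_eq_top (hn : 0 < n) :
    ∫⁻ x in Cube (-1 : Xs n) 2, ENNReal.ofReal (‖WithLp.toLp 2 x‖ ^ (-(n : ℝ))) = ⊤ := by
  have : NeZero n := ⟨hn.ne'⟩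
  have hball : ∫⁻ y in ball (0 : EuclideanSpace ℝ (Fin n)) 1,
      ENNReal.ofReal (‖y‖ ^ (-(n : ℝ))) = ⊤ := by
    refine not_lt_top_iff.1 fun h => ?_
    have := (lintegral_ball_norm_rpow_lt_top_iff volume one_pos).1 h
    rw [finrank_euclideanSpace_fin] at this
    exact lt_irrefl _ this
  rw [setLIntegral_comp_norm_toLp _ fun t => ENNReal.ofReal (t ^ (-(n : ℝ))), eq_top_iff, ← hball]
  exact lintegral_mono_set ball_subset_preimage_cube

end PowerWeight

/-- The pair `(|x|^{-n}, 1)` belongs to the bilinear class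
`A_{(1,1)}`, even though `|x|^{-n}` is not locally integrable (hence not in `A₁`). -/
theorem statement1 {n : ℕ} (hn : 0 < n) (w₁ w₂ : Xs n → ℝ≥0∞)
    (hw₁ : w₁ = fun x => ENNReal.ofReal ((Real.sqrt (∑ i, x i ^ 2)) ^ (-(n : ℝ))))
    (hw₂ : w₂ = fun _ => 1) :
    ((⨆ (c : Xs n) (l : ℝ) (_ : 0 < l),
      (avg volume (Cube c l) (fun x => (w₁ x * w₂ x) ^ (2⁻¹ : ℝ))) ^ (2 : ℕ) *
        essSup (fun x => (w₁ x)⁻¹) (volume.restrict (Cube c l)) *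
        essSup (fun x => (w₂ x)⁻¹) (volume.restrict (Cube c l))) < ⊤) ∧
    ¬ MeasureTheory.LocallyIntegrable
        (fun x : Xs n => (Real.sqrt (∑ i, x i ^ 2)) ^ (-(n : ℝ))) volume ∧
    AConst volume w₁ 1 = ⊤ := by
  subst hw₁ hw₂
  simp only [sqrt_sum_sq_eq_norm_toLp]
  refine ⟨?_, fun hloc => ?_, ?_⟩
  · obtain ⟨K, hK, hbound⟩ := exists_avg_cube_sq_mul_essSup_le hn
    have hsqrt : ∀ x : Xs n, (ENNReal.ofReal (‖WithLp.toLp 2 x‖ ^ (-(n : ℝ))) * 1) ^ (2⁻¹ : ℝ) =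
        ENNReal.ofReal (‖WithLp.toLp 2 x‖ ^ (-(n / 2 : ℝ))) := fun x => by
      rw [mul_one, ENNReal.ofReal_rpow_of_nonneg (by positivity) (by norm_num),
        ← Real.rpow_mul (norm_nonneg _)]
      ring_nf
    simp only [hsqrt, inv_one]
    refine lt_of_le_of_lt (iSup_le fun c => iSup_le fun l => iSup_le fun hl => ?_) hK
    refine (mul_le_mul_right (essSup_le_of_ae_le 1 (.of_forall fun _ => le_rfl)) _).trans ?_
    rw [mul_one]
    exact hbound c l hl
  · have := (hloc.integrableOn_isCompact (isCompact_cube (-1) 2)).lintegral_lt_top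
    rw [lintegral_cube_norm_toLp_rpow_neg_eq_top hn] at this
    exact lt_irrefl _ this
  · rw [AConst, eq_top_iff]
    refine le_iSup_of_le (-1) (le_iSup_of_le 2 (le_iSup_of_le two_pos ?_))
    rw [if_pos rfl, avg, lintegral_cube_norm_toLp_rpow_neg_eq_top hn, volume_cube,
      ENNReal.mul_top (by simp), ENNReal.top_mul]
    refine essSup_ne_zero_of_forall_ne_zero ?_ fun x => by simp
    rw [Ne, Measure.restrict_eq_zero, volume_cube]
    simp
end
end

section
/- Rescaling identity: let r⃗ ⪯ p⃗, set ρ by 1/ρ = 1/r_m − 1/r_{m+1}' + Σᵢ₌₁^{m−1} 1/pᵢ, let ŵ = (∏ᵢ₌₁^{m−1} wᵢ^{1/pᵢ})^ρ, w = ∏ᵢ₌₁ᵐ wᵢ^{p/pᵢ}, and W = w^{r_m/p} ŵ^{−r_m/δ_{m+1}} where 1/δ_{m+1} = 1/r_{m+1} − 1/p'. Then for every measurable f ≥ 0: ‖f‖_{L^p(w dx)} = ‖(f ŵ^{−1/r_{m+1}'})^{r_m}‖_{L^{p/r_m}(W^{p/r_m} ŵ dx)}^{1/r_m}, and ‖f‖_{L^{p_m}(w_m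 dx)} = ‖(f ŵ^{−1/r_m})^{r_m}‖_{L^{p_m/r_m}(W^{p_m/r_m} ŵ dx)}^{1/r_m}. -/
/-!
Both identities are instances of one rescaling: for `q, r > 0` and `0 < b < ∞`,
`∫ ((f b^{-a})^r)^{q/r} V^{q/r} b = ∫ f^q v` as soon as `V^{q/r} b^{1-aq} = v`, with
`a = 1/r'_{m+1}` for the first identity and `a = 1/r_m` for the second. To check these weight
conditions write each `wᵢ = exp Lᵢ` (possible almost everywhere): every weight in sight is then
`exp` of a linear combination of the `Lᵢ`, and the conditions become linear identities among the
exponents, the second one being exactly the definition of `ρ`.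
-/
open MeasureTheory ENNReal

noncomputable section

namespace ENNReal

lemma ofReal_exp_rpow (L y : ℝ) :
    ENNReal.ofReal (Real.exp L) ^ y = ENNReal.ofReal (Real.exp (L * y)) := by
  rw [ofReal_rpow_of_pos (Real.exp_pos L), Real.exp_mul]

lemma ofReal_exp_mul_ofReal_exp (A B : ℝ) :
    ENNReal.ofReal (Real.exp A) * ENNReal.ofReal (Real.exp B) =
      ENNReal.ofReal (Real.exp (A + B)) := by
  rw [← ofReal_mul (Real.exp_pos A).le, Real.exp_add]

lemma prod_ofReal_exp {ι : Type*} (s : Finset ι) (L : ι → ℝ) :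
    ∏ i ∈ s, ENNReal.ofReal (Real.exp (L i)) = ENNReal.ofReal (Real.exp (∑ i ∈ s, L i)) := by
  rw [← ofReal_prod_of_nonneg fun i _ => (Real.exp_pos _).le, Real.exp_sum]

lemma exists_eq_ofReal_exp {x : ℝ≥0∞} (hx : x ∈ Set.Ioo 0 ⊤) :
    ∃ L : ℝ, x = ENNReal.ofReal (Real.exp L) :=
  ⟨Real.log x.toReal, by rw [Real.exp_log (toReal_pos hx.1.ne' hx.2.ne), ofReal_toReal hx.2.ne]⟩

lemma ofReal_exp_mem_Ioo (L : ℝ) : ENNReal.ofReal (Real.exp L) ∈ Set.Ioo 0 ⊤ :=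
  ⟨ofReal_pos.2 (Real.exp_pos L), ofReal_lt_top⟩

lemma rpow_rescale (f V : ℝ≥0∞) {b : ℝ≥0∞} (hb : b ∈ Set.Ioo 0 ⊤) (a : ℝ) {q r : ℝ}
    (hq : 0 ≤ q) (hr : 0 < r) :
    ((f * b ^ (-a)) ^ r) ^ (q / r) * (V ^ (q / r) * b) =
      f ^ q * (V ^ (q / r) * b ^ (1 - a * q)) := by
  rw [← rpow_mul, mul_div_cancel₀ q hr.ne', mul_rpow_of_nonneg _ _ hq, ← rpow_mul,
    sub_eq_neg_add, neg_mul, rpow_add _ _ hb.1.ne' hb.2.ne, rpow_one]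
  ring

end ENNReal

theorem MeasureTheory.ae_exists_eq_ofReal_exp {α ι : Type*} [Countable ι] [MeasurableSpace α]
    {μ : Measure α} {w : ι → α → ℝ≥0∞} (hw : ∀ i, ∀ᵐ x ∂μ, 0 < w i x ∧ w i x < ⊤) :
    ∀ᵐ x ∂μ, ∃ L : ι → ℝ, ∀ i, w i x = ENNReal.ofReal (Real.exp (L i)) := by
  filter_upwards [ae_all_iff.2 hw] with x hx
  choose L hL using fun i => exists_eq_ofReal_exp (hx i)
  exact ⟨L, hL⟩

theorem MeasureTheory.lintegral_rpow_rescale {α : Type*} [MeasurableSpace α] {μ : Measure α}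
    (f : α → ℝ≥0∞) {b V v : α → ℝ≥0∞} {q r a : ℝ} (hq : 0 < q) (hr : 0 < r)
    (hb : ∀ᵐ x ∂μ, b x ∈ Set.Ioo 0 ⊤)
    (hV : ∀ᵐ x ∂μ, V x ^ (q / r) * b x ^ (1 - a * q) = v x) :
    ((∫⁻ x, ((f x * b x ^ (-a)) ^ r) ^ (q / r) * (V x ^ (q / r) * b x) ∂μ) ^ (q / r)⁻¹) ^ r⁻¹ =
      (∫⁻ x, f x ^ q * v x ∂μ) ^ q⁻¹ := by
  have hint : ∀ᵐ x ∂μ, ((f x * b x ^ (-a)) ^ r) ^ (q / r) * (V x ^ (q / r) * b x) =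
      f x ^ q * v x := by
    filter_upwards [hb, hV] with x hbx hVx
    rw [rpow_rescale _ _ hbx a hq.le hr, hVx]
  rw [lintegral_congr_ae hint, ← rpow_mul]
  congr 1
  field_simp

theorem statement10_general {n m : ℕ}
    (p r : Fin (m + 1) → ℝ) (rlast : ℝ)
    (hp : ∀ i, 1 ≤ p i) (hr : ∀ i, 1 ≤ r i) (hrp : ∀ i, r i ≤ p i)
    (hscal : 1 - rlast⁻¹ < ∑ i, (p i)⁻¹)
    (w : Fin (m + 1) → Xs n → ℝ≥0∞)
    (hw : ∀ i, ∀ᵐ x ∂(volume : Measure (Xs n)), 0 < w i x ∧ w i x < ⊤)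
    (f : Xs n → ℝ≥0∞) :
    let pm : ℝ := p (Fin.last m)
    let rm : ℝ := r (Fin.last m)
    let pinv : ℝ := ∑ i, (p i)⁻¹
    let rho : ℝ := (rm⁻¹ - (1 - rlast⁻¹) + ∑ i : Fin m, (p i.castSucc)⁻¹)⁻¹
    let what : Xs n → ℝ≥0∞ :=
      fun x => (∏ i : Fin m, w i.castSucc x ^ (p i.castSucc)⁻¹) ^ rho
    let wprod : Xs n → ℝ≥0∞ := fun x => ∏ i, w i x ^ (pinv⁻¹ / p i)
    let dinv : ℝ := rlast⁻¹ - (1 - pinv)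
    let W : Xs n → ℝ≥0∞ :=
      fun x => wprod x ^ (rm * pinv) * what x ^ (-(rm * dinv))
    ((∫⁻ x, f x ^ pinv⁻¹ * wprod x) ^ pinv =
      ((∫⁻ x, ((f x * what x ^ (-(1 - rlast⁻¹))) ^ rm) ^ (pinv⁻¹ / rm) *
          (W x ^ (pinv⁻¹ / rm) * what x)) ^ (pinv⁻¹ / rm)⁻¹) ^ rm⁻¹) ∧
    ((∫⁻ x, f x ^ pm * w (Fin.last m) x) ^ pm⁻¹ =
      ((∫⁻ x, ((f x * what x ^ (-rm⁻¹)) ^ rm) ^ (pm / rm) *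
          (W x ^ (pm / rm) * what x)) ^ (pm / rm)⁻¹) ^ rm⁻¹) := by
  intro pm rm pinv rho what wprod dinv W
  have hpm : 0 < p (Fin.last m) := one_pos.trans_le (hp _)
  have hrm : 0 < rm := one_pos.trans_le (hr _)
  have hpinv : 0 < pinv :=
    Finset.sum_pos (fun i _ => inv_pos.2 (one_pos.trans_le (hp i))) Finset.univ_nonempty
  have hlog := ae_exists_eq_ofReal_exp hw
  have hwhat : ∀ᵐ x ∂(volume : Measure (Xs n)), what x ∈ Set.Ioo 0 ⊤ := by
    filter_upwards [hlog] with x ⟨L, hL⟩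
    simp only [what, hL, ofReal_exp_rpow, prod_ofReal_exp]
    exact ofReal_exp_mem_Ioo _
  have hW₁ : ∀ᵐ x ∂(volume : Measure (Xs n)),
      W x ^ (pinv⁻¹ / rm) * what x ^ (1 - (1 - rlast⁻¹) * pinv⁻¹) = wprod x := by
    filter_upwards [hlog] with x ⟨L, hL⟩
    simp only [W, what, wprod, hL, ofReal_exp_rpow, prod_ofReal_exp, ofReal_exp_mul_ofReal_exp]
    congr 2
    simp only [dinv]
    field_simp
    ring
  have hW₂ : ∀ᵐ x ∂(volume : Measure (Xs n)),
      W x ^ (pm / rm) * what x ^ (1 - rm⁻¹ * pm) = w (Fin.last m) x := by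
    have hdinv : dinv = rho⁻¹ + pm⁻¹ - rm⁻¹ := by
      simp only [rho, dinv, pinv, inv_inv, Fin.sum_univ_castSucc]
      ring
    have hrho : rho ≠ 0 := by
      have hpr : pm⁻¹ ≤ rm⁻¹ := inv_anti₀ hrm (hrp _)
      have hdinv_pos : 0 < dinv := by simp only [dinv]; linarith
      exact (inv_pos.1 (by linarith)).ne'
    filter_upwards [hlog] with x ⟨L, hL⟩
    simp only [W, what, wprod, hL, ofReal_exp_rpow, prod_ofReal_exp, ofReal_exp_mul_ofReal_exp,
      Fin.sum_univ_castSucc]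
    have hsplit : ∑ i : Fin m, L i.castSucc * (pinv⁻¹ / p i.castSucc) =
        pinv⁻¹ * ∑ i : Fin m, L i.castSucc * (p i.castSucc)⁻¹ := by
      rw [Finset.mul_sum]
      exact Finset.sum_congr rfl fun i _ => by ring
    congr 2
    rw [hsplit, hdinv]
    simp only [pm]
    field_simp
    ring
  refine ⟨?_, (lintegral_rpow_rescale f hpm hrm hwhat hW₂).symm⟩
  simpa only [inv_inv] using (lintegral_rpow_rescale f (inv_pos.2 hpinv) hrm hwhat hW₁).symm

/-- Rescaling identity: with `ŵ = (∏_{i=1}^{m} w_i^{1/p_i})^ρ`,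
`w = ∏ w_i^{p/p_i}` and `W = w^{r_{m+1}/p} ŵ^{-r_{m+1}/δ_{m+2}}` (the tuple has
`m+1` entries, the last index playing the role of the paper's `m`),
`‖f‖_{L^p(w dx)}` and `‖f‖_{L^{p_m}(w_m dx)}` can be rewritten as weighted norms
with respect to the measure `ŵ dx`. -/
theorem statement10 {n m : ℕ} (hm : 1 ≤ m)
    (p r : Fin (m + 1) → ℝ) (rlast : ℝ)
    (hp : ∀ i, 1 ≤ p i) (hr : ∀ i, 1 ≤ r i) (hrp : ∀ i, r i ≤ p i)
    (hrlast : 1 ≤ rlast)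
    (hscal : 1 - rlast⁻¹ < ∑ i, (p i)⁻¹)
    (w : Fin (m + 1) → Xs n → ℝ≥0∞)
    (hw : ∀ i, ∀ᵐ x ∂(volume : Measure (Xs n)), 0 < w i x ∧ w i x < ⊤)
    (f : Xs n → ℝ≥0∞) :
    let pm : ℝ := p (Fin.last m)
    let rm : ℝ := r (Fin.last m)
    let pinv : ℝ := ∑ i, (p i)⁻¹
    let rho : ℝ := (rm⁻¹ - (1 - rlast⁻¹) + ∑ i : Fin m, (p i.castSucc)⁻¹)⁻¹
    let what : Xs n → ℝ≥0∞ :=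
      fun x => (∏ i : Fin m, w i.castSucc x ^ (p i.castSucc)⁻¹) ^ rho
    let wprod : Xs n → ℝ≥0∞ := fun x => ∏ i, w i x ^ (pinv⁻¹ / p i)
    let dinv : ℝ := rlast⁻¹ - (1 - pinv)
    let W : Xs n → ℝ≥0∞ :=
      fun x => wprod x ^ (rm * pinv) * what x ^ (-(rm * dinv))
    ((∫⁻ x, f x ^ pinv⁻¹ * wprod x) ^ pinv =
      ((∫⁻ x, ((f x * what x ^ (-(1 - rlast⁻¹))) ^ rm) ^ (pinv⁻¹ / rm) *
          (W x ^ (pinv⁻¹ / rm) * what x)) ^ (pinv⁻¹ / rm)⁻¹) ^ rm⁻¹) ∧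
    ((∫⁻ x, f x ^ pm * w (Fin.last m) x) ^ pm⁻¹ =
      ((∫⁻ x, ((f x * what x ^ (-rm⁻¹)) ^ rm) ^ (pm / rm) *
          (W x ^ (pm / rm) * what x)) ^ (pm / rm)⁻¹) ^ rm⁻¹) :=
  statement10_general p r rlast hp hr hrp hscal w hw f
end
end

section
/- Power-weight membership: let q⃗ = (q₁,q₂), r⃗ = (r₁,r₂,r₃) with 1 < rᵢ < qᵢ (i = 1,2) and r₃' > q where 1/q = 1/q₁ + 1/q₂. Then the pair (|x|^{−a}, |x|^{−a}) on ℝ belongs to A_{q⃗,r⃗} if and only if 1 − min{q₁/r₁, q₂/r₂} < a < 1 − q/r₃'. -/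
open MeasureTheory ENNReal

noncomputable section

/-- Average `⨍_Q f dx` over a set `Q ⊆ ℝ` of an `ℝ≥0∞`-valued function. -/
def avgR (Q : Set ℝ) (f : ℝ → ℝ≥0∞) : ℝ≥0∞ := (volume Q)⁻¹ * ∫⁻ x in Q, f x

/-- The bilinear `A_{q⃗,r⃗}` constant on `ℝ` (intervals as cubes), for
`q⃗ = (q₁,q₂)`, `r⃗ = (r₁,r₂,r₃)` with `r_i < q_i` and `r₃ > 1`:
`sup_Q (⨍_Q w^{r₃'/(r₃'-q)})^{1/q - 1/r₃'} ∏_{i=1}^2 (⨍_Q w_i^{r_i/(r_i-q_i)})^{1/r_i-1/q_i}`,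
`w = w₁^{q/q₁} w₂^{q/q₂}`. -/
def biAprR (q₁ q₂ r₁ r₂ r₃ : ℝ) (w₁ w₂ : ℝ → ℝ≥0∞) : ℝ≥0∞ :=
  ⨆ (t : ℝ) (l : ℝ) (_ : 0 < l),
    (avgR (Set.Icc t (t + l))
        (fun x => (w₁ x ^ ((q₁⁻¹ + q₂⁻¹)⁻¹ / q₁) * w₂ x ^ ((q₁⁻¹ + q₂⁻¹)⁻¹ / q₂)) ^
          ((1 - r₃⁻¹)⁻¹ / ((1 - r₃⁻¹)⁻¹ - (q₁⁻¹ + q₂⁻¹)⁻¹)))) ^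
      (q₁⁻¹ + q₂⁻¹ - (1 - r₃⁻¹)) *
    (avgR (Set.Icc t (t + l)) (fun x => w₁ x ^ (r₁ / (r₁ - q₁)))) ^ (r₁⁻¹ - q₁⁻¹) *
    (avgR (Set.Icc t (t + l)) (fun x => w₂ x ^ (r₂ / (r₂ - q₂)))) ^ (r₂⁻¹ - q₂⁻¹)

namespace S12
open Set

def f (b x : ℝ) : ℝ≥0∞ := ENNReal.ofReal (|x| ^ b)

lemma f_meas (b : ℝ) : Measurable (f b) := by unfold f; fun_prop

def Lam (b u v : ℝ) : ℝ≥0∞ := ∫⁻ x in Icc u v, f b x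

lemma Lam_Ioc (b u v : ℝ) : Lam b u v = ∫⁻ x in Ioc u v, f b x :=
  (setLIntegral_congr (Ioc_ae_eq_Icc)).symm

lemma Lam_add {u m v : ℝ} (h1 : u ≤ m) (h2 : m ≤ v) (b : ℝ) :
    Lam b u v = Lam b u m + Lam b m v := by
  rw [Lam_Ioc, Lam_Ioc, Lam_Ioc, ← Ioc_union_Ioc_eq_Ioc h1 h2,
    lintegral_union measurableSet_Ioc (Ioc_disjoint_Ioc_of_le le_rfl)]

lemma Lam_mono {u v u' v' : ℝ} (h : Icc u v ⊆ Icc u' v') (b : ℝ) :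
    Lam b u v ≤ Lam b u' v' :=
  lintegral_mono' (Measure.restrict_mono h le_rfl) le_rfl

lemma Lam_neg (b u v : ℝ) : Lam b (-v) (-u) = Lam b u v := by
  have hmp : MeasurePreserving (fun x : ℝ => -x) volume volume :=
    Measure.measurePreserving_neg _
  have hemb : MeasurableEmbedding (fun x : ℝ => -x) :=
    (Homeomorph.neg ℝ).measurableEmbedding
  have h2 := hmp.setLIntegral_comp_emb hemb (f b) (Icc u v)
  have him : (fun x : ℝ => -x) '' Icc u v = Icc (-v) (-u) := by
    ext x
    simp only [Set.mem_image, Set.mem_Icc]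
    constructor
    · rintro ⟨y, hy, rfl⟩; constructor <;> linarith [hy.1, hy.2]
    · intro hx; exact ⟨-x, ⟨by linarith [hx.2], by linarith [hx.1]⟩, by ring⟩
  have hfn : ∀ a : ℝ, f b (-a) = f b a := by intro a; simp [f]
  rw [him] at h2
  rw [Lam, Lam, ← h2]
  exact lintegral_congr fun a => hfn a

lemma Lam_zero {b : ℝ} (hb : -1 < b) {c : ℝ} (hc : 0 ≤ c) :
    Lam b 0 c = ENNReal.ofReal (c ^ (b+1) / (b+1)) := by
  have hint : IntegrableOn (fun x : ℝ => x ^ b) (Icc 0 c) := by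
    rw [integrableOn_Icc_iff_integrableOn_Ioc, ← intervalIntegrable_iff_integrableOn_Ioc_of_le hc]
    exact intervalIntegral.intervalIntegrable_rpow' hb
  have hcong : ∀ x ∈ Icc (0:ℝ) c, f b x = ENNReal.ofReal (x ^ b) := by
    intro x hx; rw [f, abs_of_nonneg hx.1]
  rw [Lam, setLIntegral_congr_fun measurableSet_Icc hcong]
  rw [← ofReal_integral_eq_lintegral_ofReal hint]
  · congr 1
    rw [setIntegral_congr_set Ioc_ae_eq_Icc.symm,
      ← intervalIntegral.integral_of_le hc, integral_rpow (Or.inl hb)]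
    rw [Real.zero_rpow (by linarith)]
    ring
  · filter_upwards [ae_restrict_mem measurableSet_Icc] with x hx
    exact Real.rpow_nonneg hx.1 b

lemma Lam_top {b : ℝ} (hb : b ≤ -1) {c : ℝ} (hc : 0 < c) : Lam b 0 c = ⊤ := by
  have hsub : ∫⁻ x in Ioo 0 c, f b x ≤ Lam b 0 c :=
    lintegral_mono' (Measure.restrict_mono Ioo_subset_Icc_self le_rfl) le_rfl
  have hcong : ∀ x ∈ Ioo (0:ℝ) c, f b x = ENNReal.ofReal (x ^ b) := by
    intro x hx; rw [f, abs_of_pos hx.1]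
  rw [setLIntegral_congr_fun measurableSet_Ioo hcong] at hsub
  have hni : ¬ IntegrableOn (fun x : ℝ => x ^ b) (Ioo 0 c) := by
    rw [intervalIntegral.integrableOn_Ioo_rpow_iff hc]; linarith
  have htop : ∫⁻ x in Ioo 0 c, ENNReal.ofReal (x ^ b) = ⊤ := by
    by_contra h
    refine hni ?_
    refine (lintegral_ofReal_ne_top_iff_integrable ?_ ?_).mp h
    · exact (Measurable.aestronglyMeasurable (by fun_prop))
    · filter_upwards [ae_restrict_mem measurableSet_Ioo] with x hx
      exact Real.rpow_nonneg hx.1.le b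
  exact top_le_iff.mp (htop ▸ hsub)

lemma Lam_pos (b : ℝ) {u v : ℝ} (huv : u < v) : 0 < Lam b u v := by
  rw [Lam, lintegral_pos_iff_support (by unfold f; fun_prop)]
  have hsub : Icc u v \ {0} ⊆ Function.support (f b) := by
    rintro x ⟨hx, hx0⟩
    simp only [Function.mem_support, f, ne_eq, ENNReal.ofReal_eq_zero, not_le]
    exact Real.rpow_pos_of_pos (abs_pos.mpr (by simpa using hx0)) b
  have h1 : volume (Icc u v \ {0}) ≤ (volume.restrict (Icc u v)) (Function.support (f b)) := by
    rw [Measure.restrict_apply' measurableSet_Icc]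
    exact measure_mono (fun x hx => ⟨hsub hx, hx.1⟩)
  refine lt_of_lt_of_le ?_ h1
  rw [measure_diff_null (measure_singleton 0), Real.volume_Icc]
  simpa using huv

lemma Lam_le_const {b u v M : ℝ} (h : ∀ x ∈ Icc u v, |x| ^ b ≤ M) :
    Lam b u v ≤ ENNReal.ofReal M * volume (Icc u v) := by
  rw [← setLIntegral_const (Icc u v) (ENNReal.ofReal M)]
  exact setLIntegral_mono' measurableSet_Icc fun x hx => ENNReal.ofReal_le_ofReal (h x hx)

lemma const_le_Lam {b u v M : ℝ} (h : ∀ x ∈ Icc u v, x ≠ 0 → M ≤ |x| ^ b) :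
    ENNReal.ofReal M * volume (Icc u v) ≤ Lam b u v := by
  rw [← setLIntegral_const (Icc u v) (ENNReal.ofReal M)]
  refine lintegral_mono_ae ?_
  have hne : ∀ᵐ x : ℝ, x ≠ 0 := by
    rw [ae_iff]
    have h0 : {x : ℝ | ¬x ≠ 0} = {0} := by ext x; simp
    rw [h0]
    exact measure_singleton 0
  filter_upwards [ae_restrict_mem measurableSet_Icc, ae_restrict_of_ae hne] with x hx hx0
  exact ENNReal.ofReal_le_ofReal (h x hx hx0)

/-! ### Constants -/

def Cb (b : ℝ) : ℝ := ((2:ℝ) ^ |b| + 1) * ((2:ℝ) ^ |b| + 2 * (b+1)⁻¹ + 1)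

def cb (b : ℝ) : ℝ := (8:ℝ) ^ (-(|b|+1)) / 4

lemma two_rpow_abs_one_le (b : ℝ) : (1:ℝ) ≤ (2:ℝ) ^ |b| := by
  calc (1:ℝ) = (2:ℝ) ^ (0:ℝ) := (Real.rpow_zero 2).symm
  _ ≤ (2:ℝ) ^ |b| := Real.rpow_le_rpow_of_exponent_le one_le_two (abs_nonneg b)

lemma two_rpow_neg_le (b : ℝ) : (2:ℝ) ^ (-b) ≤ (2:ℝ) ^ |b| :=
  Real.rpow_le_rpow_of_exponent_le one_le_two (neg_le_abs b)

lemma two_rpow_pos (c : ℝ) : (0:ℝ) < (2:ℝ) ^ c := Real.rpow_pos_of_pos two_pos c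

lemma Cb_pos {b : ℝ} (hb : -1 < b) : 0 < Cb b := by
  have h1 := two_rpow_abs_one_le b
  have h2 : (0:ℝ) < (b+1)⁻¹ := inv_pos.mpr (by linarith)
  unfold Cb; nlinarith

lemma cb_pos (b : ℝ) : 0 < cb b := by
  unfold cb
  have := Real.rpow_pos_of_pos (show (0:ℝ) < 8 by norm_num) (-(|b|+1))
  linarith

lemma eight_rpow (x : ℝ) : (8:ℝ) ^ x = (2:ℝ) ^ (3*x) := by
  rw [show (8:ℝ) = (2:ℝ) ^ (3:ℝ) by
    rw [show (3:ℝ) = ((3:ℕ):ℝ) by norm_num, Real.rpow_natCast]; norm_num]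
  rw [← Real.rpow_mul (by norm_num : (0:ℝ) ≤ 2)]

lemma cb_le_unit {b c : ℝ} (h : c ≤ 3*(|b|+1)) : cb b * (2:ℝ) ^ c ≤ 1/4 := by
  unfold cb
  rw [eight_rpow, div_mul_eq_mul_div, ← Real.rpow_add two_pos]
  have h1 : (2:ℝ) ^ (3 * -(|b|+1) + c) ≤ 1 :=
    Real.rpow_le_one_of_one_le_of_nonpos one_le_two (by linarith)
  linarith

lemma cb_le_one (b : ℝ) : cb b ≤ 1 := by
  have := cb_le_unit (b := b) (c := 0) (by positivity)
  rw [Real.rpow_zero, mul_one] at this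
  linarith

/-! ### Upper bound -/

lemma Lam_upper_pos {b t l : ℝ} (hb : -1 < b) (hb0 : b < 0) (hl : 0 < l) (ht : 0 ≤ t) :
    Lam b t (t+l) ≤ ENNReal.ofReal (((2:ℝ) ^ |b| + 2 * (b+1)⁻¹) * ((t+l) ^ b * l)) := by
  have hβ : (0:ℝ) < b + 1 := by linarith
  have hβi : (0:ℝ) < (b+1)⁻¹ := inv_pos.mpr hβ
  have htl : (0:ℝ) < t + l := by linarith
  have hRb : (0:ℝ) < (t+l) ^ b := Real.rpow_pos_of_pos htl b
  have h2b := two_rpow_abs_one_le b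
  rcases le_or_gt l t with hlt | hlt
  · have ht0 : (0:ℝ) < t := lt_of_lt_of_le hl hlt
    have hpt : ∀ x ∈ Icc t (t+l), |x| ^ b ≤ t ^ b := by
      intro x hx
      have hx0 : (0:ℝ) < x := lt_of_lt_of_le ht0 hx.1
      rw [abs_of_pos hx0]
      exact Real.rpow_le_rpow_of_nonpos ht0 hx.1 hb0.le
    have h1 : t ^ b ≤ ((t+l)/2) ^ b :=
      Real.rpow_le_rpow_of_nonpos (by linarith) (by linarith) hb0.le
    have h2 : ((t+l)/2) ^ b = (t+l) ^ b * 2 ^ (-b) := by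
      rw [Real.div_rpow htl.le (by norm_num), Real.rpow_neg (by norm_num)]
      ring
    have hle := Lam_le_const hpt
    rw [Real.volume_Icc, show t + l - t = l by ring,
      ← ENNReal.ofReal_mul (Real.rpow_nonneg ht0.le b)] at hle
    refine hle.trans (ENNReal.ofReal_le_ofReal ?_)
    have h3 : t ^ b ≤ (t+l) ^ b * 2 ^ |b| := by
      calc t ^ b ≤ (t+l) ^ b * 2 ^ (-b) := h1.trans_eq h2
      _ ≤ (t+l) ^ b * 2 ^ |b| := mul_le_mul_of_nonneg_left (two_rpow_neg_le b) hRb.le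
    nlinarith [mul_le_mul_of_nonneg_right h3 hl.le, mul_pos hRb hl,
      mul_pos (mul_pos hRb hl) hβi]
  · have hsub : Icc t (t+l) ⊆ Icc 0 (2*l) := Icc_subset_Icc ht (by linarith)
    have hmain := (Lam_mono hsub b).trans_eq (Lam_zero hb (by linarith))
    refine hmain.trans (ENNReal.ofReal_le_ofReal ?_)
    have h2l : (0:ℝ) < 2*l := by linarith
    have h1 : (2*l) ^ (b+1) = (2*l) ^ b * (2*l) := by
      rw [Real.rpow_add h2l, Real.rpow_one]
    have h2 : (2*l) ^ b ≤ (t+l) ^ b :=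
      Real.rpow_le_rpow_of_nonpos htl (by linarith) hb0.le
    rw [h1, div_eq_mul_inv]
    have h4 : (0:ℝ) < (2*l) ^ b := Real.rpow_pos_of_pos h2l b
    nlinarith [mul_le_mul_of_nonneg_right h2
        (by positivity : (0:ℝ) ≤ 2 * l * (b+1)⁻¹),
      mul_pos (mul_pos hRb hl) hβi,
      mul_le_mul_of_nonneg_right h2b (mul_pos hRb hl).le]

lemma Lam_upper {b t l : ℝ} (hb : -1 < b) (hl : 0 < l) :
    Lam b t (t+l) ≤ ENNReal.ofReal (Cb b * ((|t|+l) ^ b * l)) := by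
  have hβ : (0:ℝ) < b+1 := by linarith
  have hβi : (0:ℝ) < (b+1)⁻¹ := inv_pos.mpr hβ
  have hR : (0:ℝ) < |t| + l := by linarith [abs_nonneg t]
  have hRb : (0:ℝ) < (|t|+l) ^ b := Real.rpow_pos_of_pos hR b
  have h2b := two_rpow_abs_one_le b
  have hX : (0:ℝ) < (|t|+l) ^ b * l := mul_pos hRb hl
  rcases le_or_gt 0 b with hb0 | hb0
  · have hpt : ∀ x ∈ Icc t (t+l), |x| ^ b ≤ (|t|+l) ^ b := by
      intro x hx
      refine Real.rpow_le_rpow (abs_nonneg x) ?_ hb0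
      rw [abs_le]
      exact ⟨by linarith [hx.1, neg_abs_le t], by linarith [hx.2, le_abs_self t]⟩
    have h := Lam_le_const hpt
    rw [Real.volume_Icc, show t + l - t = l by ring,
      ← ENNReal.ofReal_mul hRb.le] at h
    refine h.trans (ENNReal.ofReal_le_ofReal ?_)
    have hCb1 : (1:ℝ) ≤ Cb b := by unfold Cb; nlinarith
    nlinarith [mul_le_mul_of_nonneg_right hCb1 hX.le]
  · rcases le_or_gt 0 t with ht | ht
    · have h := Lam_upper_pos hb hb0 hl ht
      rw [abs_of_nonneg ht]
      refine h.trans (ENNReal.ofReal_le_ofReal ?_)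
      have hD : (2:ℝ) ^ |b| + 2*(b+1)⁻¹ ≤ Cb b := by unfold Cb; nlinarith
      have hX' : (0:ℝ) ≤ (t+l) ^ b * l := by
        have : (0:ℝ) < t + l := by linarith
        positivity
      exact mul_le_mul_of_nonneg_right hD hX'
    · rcases le_or_gt (t+l) 0 with htl | htl
      · have heq : Lam b t (t+l) = Lam b (-(t+l)) (-(t+l)+l) := by
          have h0 := Lam_neg b (-(t+l)) (-t)
          simp only [neg_neg] at h0
          rw [show -(t+l)+l = -t by ring]
          exact h0
        have ht' : (0:ℝ) ≤ -(t+l) := by linarith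
        have h := Lam_upper_pos hb hb0 hl ht'
        rw [heq]
        refine h.trans (ENNReal.ofReal_le_ofReal ?_)
        rw [show -(t+l)+l = -t by ring]
        have habs : |t| = -t := abs_of_neg ht
        have h0t : (0:ℝ) < -t := by linarith
        have h2 : (-t) ^ b ≤ ((|t|+l)/2) ^ b := by
          refine Real.rpow_le_rpow_of_nonpos (by linarith) ?_ hb0.le
          rw [habs]; linarith
        have h3 : ((|t|+l)/2) ^ b = (|t|+l) ^ b * 2 ^ (-b) := by
          rw [Real.div_rpow hR.le (by norm_num), Real.rpow_neg (by norm_num)]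
          ring
        have h4 : (-t) ^ b ≤ (|t|+l) ^ b * 2 ^ |b| := by
          calc (-t) ^ b ≤ (|t|+l) ^ b * 2 ^ (-b) := h2.trans_eq h3
          _ ≤ (|t|+l) ^ b * 2 ^ |b| := mul_le_mul_of_nonneg_left (two_rpow_neg_le b) hRb.le
        have hA : (-t) ^ b * l ≤ 2 ^ |b| * ((|t|+l) ^ b * l) := by
          nlinarith [mul_le_mul_of_nonneg_right h4 hl.le]
        have hD : (0:ℝ) < (2:ℝ) ^ |b| + 2*(b+1)⁻¹ := by positivity
        have hCb : ((2:ℝ) ^ |b| + 2*(b+1)⁻¹) * (2:ℝ) ^ |b| ≤ Cb b := by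
          unfold Cb; nlinarith
        calc ((2:ℝ) ^ |b| + 2*(b+1)⁻¹) * ((-t) ^ b * l)
            ≤ ((2:ℝ) ^ |b| + 2*(b+1)⁻¹) * (2 ^ |b| * ((|t|+l) ^ b * l)) :=
              mul_le_mul_of_nonneg_left hA hD.le
          _ = (((2:ℝ) ^ |b| + 2*(b+1)⁻¹) * 2 ^ |b|) * ((|t|+l) ^ b * l) := by ring
          _ ≤ Cb b * ((|t|+l) ^ b * l) := mul_le_mul_of_nonneg_right hCb hX.le
      · have hadd := Lam_add ht.le htl.le b
        have hneg : Lam b t 0 = Lam b 0 (-t) := by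
          have h0 := Lam_neg b 0 (-t)
          simp only [neg_neg, neg_zero] at h0
          exact h0
        have h0t : (0:ℝ) ≤ -t := by linarith
        rw [hadd, hneg, Lam_zero hb h0t, Lam_zero hb htl.le,
          ← ENNReal.ofReal_add (by positivity) (by positivity)]
        refine ENNReal.ofReal_le_ofReal ?_
        have habs : |t| = -t := abs_of_neg ht
        have hc1 : (-t) ^ (b+1) ≤ 2 ^ |b| * ((|t|+l) ^ b * l) := by
          have e1 : (-t) ^ (b+1) ≤ l ^ (b+1) :=
            Real.rpow_le_rpow h0t (by linarith) hβ.le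
          have e2 : l ^ (b+1) = l ^ b * l := by rw [Real.rpow_add hl, Real.rpow_one]
          have e3 : l ^ b ≤ ((|t|+l)/2) ^ b := by
            refine Real.rpow_le_rpow_of_nonpos (by linarith) ?_ hb0.le
            rw [habs]; linarith
          have e4 : ((|t|+l)/2) ^ b = (|t|+l) ^ b * 2 ^ (-b) := by
            rw [Real.div_rpow hR.le (by norm_num), Real.rpow_neg (by norm_num)]
            ring
          have e5 : l ^ b ≤ (|t|+l) ^ b * 2 ^ |b| := by
            calc l ^ b ≤ (|t|+l) ^ b * 2 ^ (-b) := e3.trans_eq e4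
            _ ≤ (|t|+l) ^ b * 2 ^ |b| := mul_le_mul_of_nonneg_left (two_rpow_neg_le b) hRb.le
          calc (-t) ^ (b+1) ≤ l ^ b * l := e1.trans_eq e2
          _ ≤ ((|t|+l) ^ b * 2 ^ |b|) * l := mul_le_mul_of_nonneg_right e5 hl.le
          _ = 2 ^ |b| * ((|t|+l) ^ b * l) := by ring
        have hc2 : (t+l) ^ (b+1) ≤ 2 ^ |b| * ((|t|+l) ^ b * l) := by
          have e1 : (t+l) ^ (b+1) ≤ l ^ (b+1) :=
            Real.rpow_le_rpow (by linarith) (by linarith) hβ.le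
          have e2 : l ^ (b+1) = l ^ b * l := by rw [Real.rpow_add hl, Real.rpow_one]
          have e3 : l ^ b ≤ ((|t|+l)/2) ^ b := by
            refine Real.rpow_le_rpow_of_nonpos (by linarith) ?_ hb0.le
            rw [habs]; linarith
          have e4 : ((|t|+l)/2) ^ b = (|t|+l) ^ b * 2 ^ (-b) := by
            rw [Real.div_rpow hR.le (by norm_num), Real.rpow_neg (by norm_num)]
            ring
          have e5 : l ^ b ≤ (|t|+l) ^ b * 2 ^ |b| := by
            calc l ^ b ≤ (|t|+l) ^ b * 2 ^ (-b) := e3.trans_eq e4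
            _ ≤ (|t|+l) ^ b * 2 ^ |b| := mul_le_mul_of_nonneg_left (two_rpow_neg_le b) hRb.le
          calc (t+l) ^ (b+1) ≤ l ^ b * l := e1.trans_eq e2
          _ ≤ ((|t|+l) ^ b * 2 ^ |b|) * l := mul_le_mul_of_nonneg_right e5 hl.le
          _ = 2 ^ |b| * ((|t|+l) ^ b * l) := by ring
        have hCb : 2 * ((2:ℝ) ^ |b| * (b+1)⁻¹) ≤ Cb b := by
          unfold Cb; nlinarith
        have hdiv1 : (-t) ^ (b+1) / (b+1) = (-t) ^ (b+1) * (b+1)⁻¹ := div_eq_mul_inv _ _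
        have hdiv2 : (t+l) ^ (b+1) / (b+1) = (t+l) ^ (b+1) * (b+1)⁻¹ := div_eq_mul_inv _ _
        rw [hdiv1, hdiv2]
        nlinarith [mul_le_mul_of_nonneg_right hc1 hβi.le,
          mul_le_mul_of_nonneg_right hc2 hβi.le,
          mul_le_mul_of_nonneg_right hCb hX.le]

/-! ### Lower bound -/

lemma Lam_lower_pos {b t l : ℝ} (hb0 : 0 ≤ b) (hl : 0 < l) (ht : 0 ≤ t) :
    ENNReal.ofReal ((2:ℝ) ^ (-b) * ((t+l) ^ b * (l/2))) ≤ Lam b t (t+l) := by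
  have htl : (0:ℝ) < t + l := by linarith
  have hsub : Icc (t+l/2) (t+l) ⊆ Icc t (t+l) := Icc_subset_Icc (by linarith) le_rfl
  have hpt : ∀ x ∈ Icc (t+l/2) (t+l), x ≠ 0 → (2:ℝ) ^ (-b) * (t+l) ^ b ≤ |x| ^ b := by
    intro x hx _
    have hx0 : (0:ℝ) < x := by linarith [hx.1]
    rw [abs_of_pos hx0]
    have he : (2:ℝ) ^ (-b) * (t+l) ^ b = ((t+l)/2) ^ b := by
      rw [Real.div_rpow htl.le (by norm_num), Real.rpow_neg (by norm_num)]
      ring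
    rw [he]
    exact Real.rpow_le_rpow (by linarith) (by linarith [hx.1]) hb0
  have h := (const_le_Lam hpt).trans (Lam_mono hsub b)
  rw [Real.volume_Icc, show t + l - (t+l/2) = l/2 by ring] at h
  refine le_trans (le_of_eq ?_) h
  rw [← ENNReal.ofReal_mul (by positivity)]
  ring_nf

lemma Lam_lower {b t l : ℝ} (hl : 0 < l) :
    ENNReal.ofReal (cb b * ((|t|+l) ^ b * l)) ≤ Lam b t (t+l) := by
  have hR : (0:ℝ) < |t| + l := by linarith [abs_nonneg t]
  have hRb : (0:ℝ) < (|t|+l) ^ b := Real.rpow_pos_of_pos hR b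
  have hX : (0:ℝ) < (|t|+l) ^ b * l := mul_pos hRb hl
  rcases le_or_gt b 0 with hb0 | hb0
  · -- b ≤ 0 : pointwise lower bound by (|t|+l)^b
    have hpt : ∀ x ∈ Icc t (t+l), x ≠ 0 → (|t|+l) ^ b ≤ |x| ^ b := by
      intro x hx hx0
      refine Real.rpow_le_rpow_of_nonpos (abs_pos.mpr hx0) ?_ hb0
      rw [abs_le]
      exact ⟨by linarith [hx.1, neg_abs_le t], by linarith [hx.2, le_abs_self t]⟩
    have h := const_le_Lam hpt
    rw [Real.volume_Icc, show t + l - t = l by ring,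
      ← ENNReal.ofReal_mul hRb.le] at h
    refine le_trans (ENNReal.ofReal_le_ofReal ?_) h
    nlinarith [cb_le_one b, cb_pos b]
  · rcases le_or_gt 0 t with ht | ht
    · have h := Lam_lower_pos hb0.le hl ht
      rw [abs_of_nonneg ht]
      refine le_trans (ENNReal.ofReal_le_ofReal ?_) h
      have hkey : cb b ≤ (2:ℝ) ^ (-b) / 2 := by
        have h1 := cb_le_unit (b := b) (c := b+1) (by
          have := abs_nonneg b; have := le_abs_self b; linarith)
        have h2 : (2:ℝ) ^ (b+1) = 2 ^ b * 2 := by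
          rw [Real.rpow_add two_pos, Real.rpow_one]
        have h3 : (2:ℝ) ^ (-b) * 2 ^ b = 1 := by
          rw [← Real.rpow_add two_pos]; simp
        have h4 := two_rpow_pos b
        have h5 := two_rpow_pos (-b)
        nlinarith [mul_le_mul_of_nonneg_right h1 h5.le]
      have htl : (0:ℝ) < t + l := by linarith
      have hTb : (0:ℝ) < (t+l) ^ b := Real.rpow_pos_of_pos htl b
      calc cb b * ((t+l) ^ b * l) ≤ ((2:ℝ) ^ (-b) / 2) * ((t+l) ^ b * l) :=
            mul_le_mul_of_nonneg_right hkey (by positivity)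
        _ = (2:ℝ) ^ (-b) * ((t+l) ^ b * (l/2)) := by ring
    · rcases le_or_gt (t+l) 0 with htl | htl
      · -- negative side
        have heq : Lam b t (t+l) = Lam b (-(t+l)) (-(t+l)+l) := by
          have h0 := Lam_neg b (-(t+l)) (-t)
          simp only [neg_neg] at h0
          rw [show -(t+l)+l = -t by ring]
          exact h0
        have ht' : (0:ℝ) ≤ -(t+l) := by linarith
        have h := Lam_lower_pos hb0.le hl ht'
        rw [heq]
        refine le_trans (ENNReal.ofReal_le_ofReal ?_) h
        rw [show -(t+l)+l = -t by ring]
        have habs : |t| = -t := abs_of_neg ht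
        have h0t : (0:ℝ) < -t := by linarith
        -- (-t) ≥ (|t|+l)/2
        have hA : (|t|+l) ^ b * 2 ^ (-b) ≤ (-t) ^ b := by
          have e1 : ((|t|+l)/2) ^ b ≤ (-t) ^ b := by
            refine Real.rpow_le_rpow (by positivity) ?_ hb0.le
            rw [habs]; linarith
          have e2 : ((|t|+l)/2) ^ b = (|t|+l) ^ b * 2 ^ (-b) := by
            rw [Real.div_rpow hR.le (by norm_num), Real.rpow_neg (by norm_num)]
            ring
          linarith [e2 ▸ e1]
        have hkey : cb b ≤ ((2:ℝ) ^ (-b) * 2 ^ (-b)) / 2 := by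
          have h1 := cb_le_unit (b := b) (c := 2*b+1) (by
            have := abs_nonneg b; have := le_abs_self b; linarith)
          have h2 : (2:ℝ) ^ (2*b+1) * ((2:ℝ) ^ (-b) * 2 ^ (-b)) = 2 := by
            rw [← Real.rpow_add two_pos, ← Real.rpow_add two_pos,
              show 2*b+1 + (-b + -b) = (1:ℝ) by ring, Real.rpow_one]
          have h5 := two_rpow_pos (-b)
          have h6 := two_rpow_pos (2*b+1)
          nlinarith [mul_le_mul_of_nonneg_right h1 (mul_pos h5 h5).le]
        have h5 := two_rpow_pos (-b)
        calc cb b * ((|t|+l) ^ b * l)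
            ≤ (((2:ℝ) ^ (-b) * 2 ^ (-b)) / 2) * ((|t|+l) ^ b * l) :=
              mul_le_mul_of_nonneg_right hkey hX.le
          _ = (2:ℝ) ^ (-b) * (((|t|+l) ^ b * 2 ^ (-b)) * (l/2)) := by ring
          _ ≤ (2:ℝ) ^ (-b) * ((-t) ^ b * (l/2)) := by
              refine mul_le_mul_of_nonneg_left ?_ h5.le
              exact mul_le_mul_of_nonneg_right hA (by positivity)
      · -- middle : t < 0 < t + l
        have hcb8 : cb b * (8:ℝ) ^ b ≤ 1/4 := by
          have h1 := cb_le_unit (b := b) (c := 3*b) (by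
            have := abs_nonneg b; have := le_abs_self b; linarith)
          rw [eight_rpow]
          exact h1
        have hl4 : (0:ℝ) < l/4 := by linarith
        have hq : ((l/4):ℝ) ^ b > 0 := Real.rpow_pos_of_pos hl4 b
        have h8 : (0:ℝ) < (8:ℝ) ^ b := Real.rpow_pos_of_pos (by norm_num) b
        -- key real inequality
        have hmain : cb b * ((|t|+l) ^ b * l) ≤ (l/4) ^ b * (l/4) := by
          have hR2l : |t| + l ≤ 2*l := by
            have : |t| = -t := abs_of_neg ht
            linarith [this ▸ le_refl (|t|:ℝ)]
          have e1 : (|t|+l) ^ b ≤ (2*l) ^ b :=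
            Real.rpow_le_rpow hR.le hR2l hb0.le
          have e2 : ((2*l):ℝ) ^ b = 8 ^ b * (l/4) ^ b := by
            rw [← Real.mul_rpow (by norm_num) hl4.le]
            congr 1; ring
          have hc : cb b * (8 ^ b * (l/4) ^ b) * l ≤ (l/4) ^ b * (l/4) := by
            nlinarith [mul_le_mul_of_nonneg_right hcb8 (mul_pos hq hl).le]
          calc cb b * ((|t|+l) ^ b * l) ≤ cb b * ((2*l) ^ b * l) := by
                refine mul_le_mul_of_nonneg_left ?_ (cb_pos b).le
                exact mul_le_mul_of_nonneg_right e1 hl.le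
            _ = cb b * (8 ^ b * (l/4) ^ b) * l := by rw [e2]; ring
            _ ≤ (l/4) ^ b * (l/4) := hc
        rcases le_or_gt (l/2) (t+l) with hhalf | hhalf
        · -- right subinterval [l/4, l/2]
          have hsub : Icc (l/4) (l/2) ⊆ Icc t (t+l) :=
            Icc_subset_Icc (by linarith) (by linarith)
          have hpt : ∀ x ∈ Icc (l/4) (l/2), x ≠ 0 → (l/4) ^ b ≤ |x| ^ b := by
            intro x hx _
            have hx0 : (0:ℝ) < x := by linarith [hx.1]
            rw [abs_of_pos hx0]
            exact Real.rpow_le_rpow hl4.le hx.1 hb0.le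
          have h := (const_le_Lam hpt).trans (Lam_mono hsub b)
          rw [Real.volume_Icc, show l/2 - l/4 = l/4 by ring,
            ← ENNReal.ofReal_mul hq.le] at h
          exact le_trans (ENNReal.ofReal_le_ofReal hmain) h
        · -- left subinterval [-l/2, -l/4]
          have hmt : l/2 ≤ -t := by linarith
          have hsub : Icc (-(l/2)) (-(l/4)) ⊆ Icc t (t+l) :=
            Icc_subset_Icc (by linarith) (by linarith)
          have hpt : ∀ x ∈ Icc (-(l/2)) (-(l/4)), x ≠ 0 → (l/4) ^ b ≤ |x| ^ b := by
            intro x hx _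
            have hx0 : x < 0 := by linarith [hx.2]
            rw [abs_of_neg hx0]
            refine Real.rpow_le_rpow hl4.le ?_ hb0.le
            linarith [hx.2]
          have h := (const_le_Lam hpt).trans (Lam_mono hsub b)
          rw [Real.volume_Icc, show -(l/4) - -(l/2) = l/4 by ring,
            ← ENNReal.ofReal_mul hq.le] at h
          exact le_trans (ENNReal.ofReal_le_ofReal hmain) h

/-! ### Average bounds -/

lemma vol_Icc {t l : ℝ} : volume (Icc t (t+l)) = ENNReal.ofReal l := by
  rw [Real.volume_Icc]; congr 1; ring

lemma inv_vol_mul {l : ℝ} (hl : 0 < l) (c : ℝ≥0∞) :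
    (ENNReal.ofReal l)⁻¹ * (c * ENNReal.ofReal l) = c := by
  rw [mul_comm c, ← mul_assoc, ENNReal.inv_mul_cancel, one_mul]
  · exact (ENNReal.ofReal_pos.mpr hl).ne'
  · exact ENNReal.ofReal_ne_top

lemma avg_eq_Lam (b t l : ℝ) :
    avgR (Icc t (t+l)) (f b) = (ENNReal.ofReal l)⁻¹ * Lam b t (t+l) := by
  rw [avgR, vol_Icc, Lam]

lemma avg_le {b t l : ℝ} (hb : -1 < b) (hl : 0 < l) :
    avgR (Icc t (t+l)) (f b) ≤ ENNReal.ofReal (Cb b * (|t|+l) ^ b) := by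
  rw [avg_eq_Lam]
  have h := Lam_upper (t := t) hb hl
  have hR : (0:ℝ) < |t| + l := by linarith [abs_nonneg t]
  have hRb : (0:ℝ) < (|t|+l) ^ b := Real.rpow_pos_of_pos hR b
  have hCb := Cb_pos hb
  have he : ENNReal.ofReal (Cb b * ((|t|+l) ^ b * l)) =
      ENNReal.ofReal (Cb b * (|t|+l) ^ b) * ENNReal.ofReal l := by
    rw [← ENNReal.ofReal_mul (by positivity)]; ring_nf
  rw [he] at h
  calc (ENNReal.ofReal l)⁻¹ * Lam b t (t+l)
      ≤ (ENNReal.ofReal l)⁻¹ * (ENNReal.ofReal (Cb b * (|t|+l) ^ b) * ENNReal.ofReal l) :=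
        mul_le_mul_right h _
    _ = ENNReal.ofReal (Cb b * (|t|+l) ^ b) := inv_vol_mul hl _

lemma le_avg {b t l : ℝ} (hl : 0 < l) :
    ENNReal.ofReal (cb b * (|t|+l) ^ b) ≤ avgR (Icc t (t+l)) (f b) := by
  rw [avg_eq_Lam]
  have h := Lam_lower (b := b) (t := t) hl
  have hR : (0:ℝ) < |t| + l := by linarith [abs_nonneg t]
  have hRb : (0:ℝ) < (|t|+l) ^ b := Real.rpow_pos_of_pos hR b
  have he : ENNReal.ofReal (cb b * ((|t|+l) ^ b * l)) =
      ENNReal.ofReal (cb b * (|t|+l) ^ b) * ENNReal.ofReal l := by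
    rw [← ENNReal.ofReal_mul (mul_nonneg (cb_pos b).le hRb.le)]; ring_nf
  rw [he] at h
  calc ENNReal.ofReal (cb b * (|t|+l) ^ b)
      = (ENNReal.ofReal l)⁻¹ * (ENNReal.ofReal (cb b * (|t|+l) ^ b) * ENNReal.ofReal l) :=
        (inv_vol_mul hl _).symm
    _ ≤ (ENNReal.ofReal l)⁻¹ * Lam b t (t+l) := mul_le_mul_right h _

/-! ### Integrand normalization -/

lemma ofReal_rpow_rpow {x : ℝ} (hx : x ≠ 0) (m c : ℝ) :
    (ENNReal.ofReal (|x| ^ m)) ^ c = ENNReal.ofReal (|x| ^ (m * c)) := by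
  have h0 : (0:ℝ) < |x| ^ m := Real.rpow_pos_of_pos (abs_pos.mpr hx) _
  rw [ENNReal.ofReal_rpow_of_pos h0, ← Real.rpow_mul (abs_nonneg x)]

lemma avg_congr {S : Set ℝ} {g : ℝ → ℝ≥0∞} {b : ℝ} (h : ∀ x, x ≠ 0 → g x = f b x) :
    avgR S g = avgR S (f b) := by
  unfold avgR
  congr 1
  apply lintegral_congr_ae
  have hne : ∀ᵐ x : ℝ, x ≠ 0 := by
    rw [ae_iff]
    have h0 : {x : ℝ | ¬x ≠ 0} = {0} := by ext x; simp
    rw [h0]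
    exact measure_singleton 0
  filter_upwards [ae_restrict_of_ae hne] with x hx
  exact h x hx

end S12

open Set S12

set_option maxHeartbeats 2000000 in
/-- `(|x|^{-a}, |x|^{-a}) ∈ A_{q⃗,r⃗}` on `ℝ` if and only if
`1 - min{q₁/r₁, q₂/r₂} < a < 1 - q/r₃'`. -/
theorem statement12 (q₁ q₂ r₁ r₂ r₃ : ℝ)
    (h₁ : 1 < r₁) (h₂ : 1 < r₂) (h₃ : 1 < r₃)
    (hq₁ : r₁ < q₁) (hq₂ : r₂ < q₂)
    (hq₃ : 1 - r₃⁻¹ < q₁⁻¹ + q₂⁻¹)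
    (a : ℝ) :
    biAprR q₁ q₂ r₁ r₂ r₃
        (fun x => ENNReal.ofReal (|x| ^ (-a)))
        (fun x => ENNReal.ofReal (|x| ^ (-a))) < ⊤ ↔
      (1 - min (q₁ / r₁) (q₂ / r₂) < a ∧
        a < 1 - (q₁⁻¹ + q₂⁻¹)⁻¹ * (1 - r₃⁻¹)) := by
  simp only [biAprR]
  have hr1 : (0:ℝ) < r₁ := by linarith
  have hr2 : (0:ℝ) < r₂ := by linarith
  have hq1 : (0:ℝ) < q₁ := by linarith
  have hq2 : (0:ℝ) < q₂ := by linarith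
  have hr3i : r₃⁻¹ < 1 := by
    have h0 : (1:ℝ)/r₃ < 1 := by rw [div_lt_one (by linarith)]; linarith
    simpa [one_div] using h0
  set A := q₁⁻¹ + q₂⁻¹ with hAdef
  set B := 1 - r₃⁻¹ with hBdef
  have hA : (0:ℝ) < A := by rw [hAdef]; positivity
  have hB : (0:ℝ) < B := by rw [hBdef]; linarith
  have hABpos : (0:ℝ) < A - B := by
    have : B < A := hq₃
    linarith
  set E := B⁻¹ / (B⁻¹ - A⁻¹) with hEdef
  have hBiAi : B⁻¹ - A⁻¹ = (A - B)/(A*B) := by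
    field_simp
  have hE : E = A / (A - B) := by
    rw [hEdef, hBiAi, div_div_eq_mul_div]
    rw [div_eq_div_iff (by positivity) hABpos.ne']
    field_simp
  have hEpos : (0:ℝ) < E := by rw [hE]; positivity
  set b0 := -a * E with hb0def
  set b1 := -a * (r₁/(r₁-q₁)) with hb1def
  set b2 := -a * (r₂/(r₂-q₂)) with hb2def
  have hth1 : (0:ℝ) < r₁⁻¹ - q₁⁻¹ := by
    rw [sub_pos]
    exact inv_strictAnti₀ hr1 hq₁
  have hth2 : (0:ℝ) < r₂⁻¹ - q₂⁻¹ := by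
    rw [sub_pos]
    exact inv_strictAnti₀ hr2 hq₂
  have hrq1 : r₁ - q₁ ≠ 0 := by intro h; linarith [sub_eq_zero.mp h]
  have hrq2 : r₂ - q₂ ≠ 0 := by intro h; linarith [sub_eq_zero.mp h]
  have e0 : b0 * (A - B) = -a * A := by
    rw [hb0def, hE]; field_simp
  have e1 : b1 * (r₁⁻¹ - q₁⁻¹) = a * q₁⁻¹ := by
    rw [hb1def]; field_simp; ring
  have e2 : b2 * (r₂⁻¹ - q₂⁻¹) = a * q₂⁻¹ := by
    rw [hb2def]; field_simp; ring
  have hsum : b0 * (A - B) + b1 * (r₁⁻¹ - q₁⁻¹) + b2 * (r₂⁻¹ - q₂⁻¹) = 0 := by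
    rw [e0, e1, e2, hAdef]; ring
  -- translations of the bounds
  have hineq0 : a < 1 - A⁻¹ * B ↔ -1 < b0 := by
    rw [hb0def, hE]
    have hP : (0:ℝ) < A/(A-B) := by positivity
    constructor
    · intro h
      have h' : a * A < A - B := by
        have h2 := mul_lt_mul_of_pos_left h hA
        have h3 : A * (1 - A⁻¹ * B) = A - B := by
          have h3' : A * (A⁻¹ * B) = B := by
            rw [← mul_assoc, mul_inv_cancel₀ hA.ne', one_mul]
          rw [mul_sub, h3', mul_one]
        rw [h3] at h2
        linarith
      have h4 : a * (A/(A-B)) < 1 := by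
        rw [mul_div_assoc']
        rw [div_lt_one hABpos]
        linarith
      linarith
    · intro h
      have h1 : a * (A/(A-B)) < 1 := by linarith
      have h2 : a * A < A - B := by
        rw [mul_div_assoc', div_lt_one hABpos] at h1
        linarith
      have h3 : a < (A - B)/A := by
        rw [lt_div_iff₀ hA]
        linarith
      have h4 : (A - B)/A = 1 - A⁻¹ * B := by field_simp
      linarith [h4 ▸ h3]
  have hineq1 : 1 - q₁/r₁ < a ↔ -1 < b1 := by
    have hb1' : b1 = a * (r₁/(q₁-r₁)) := by
      rw [hb1def, show r₁ - q₁ = -(q₁-r₁) by ring, div_neg]; ring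
    have hQ : (0:ℝ) < q₁ - r₁ := by linarith
    rw [hb1']
    constructor
    · intro h
      have hc : r₁ * (q₁/r₁) = q₁ := by field_simp
      have h' : r₁ - q₁ < a * r₁ := by nlinarith [mul_lt_mul_of_pos_left h hr1]
      have e : a * (r₁/(q₁-r₁)) = (a*r₁)/(q₁-r₁) := by ring
      rw [e, lt_div_iff₀ hQ]
      linarith
    · intro h
      have e : a * (r₁/(q₁-r₁)) = (a*r₁)/(q₁-r₁) := by ring
      rw [e, lt_div_iff₀ hQ] at h
      have h4 : (r₁ - q₁)/r₁ < a := by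
        rw [div_lt_iff₀ hr1]
        linarith
      have h5 : (r₁ - q₁)/r₁ = 1 - q₁/r₁ := by field_simp
      linarith [h5 ▸ h4]
  have hineq2 : 1 - q₂/r₂ < a ↔ -1 < b2 := by
    have hb2' : b2 = a * (r₂/(q₂-r₂)) := by
      rw [hb2def, show r₂ - q₂ = -(q₂-r₂) by ring, div_neg]; ring
    have hQ : (0:ℝ) < q₂ - r₂ := by linarith
    rw [hb2']
    constructor
    · intro h
      have hc : r₂ * (q₂/r₂) = q₂ := by field_simp
      have h' : r₂ - q₂ < a * r₂ := by
        have hexp : r₂ * (1 - q₂/r₂) = r₂ - q₂ := by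
          rw [mul_sub, hc, mul_one]
        have h2 := mul_lt_mul_of_pos_left h hr2
        rw [hexp] at h2
        linarith
      have e : a * (r₂/(q₂-r₂)) = (a*r₂)/(q₂-r₂) := by ring
      rw [e, lt_div_iff₀ hQ]
      linarith
    · intro h
      have e : a * (r₂/(q₂-r₂)) = (a*r₂)/(q₂-r₂) := by ring
      rw [e, lt_div_iff₀ hQ] at h
      have h4 : (r₂ - q₂)/r₂ < a := by
        rw [div_lt_iff₀ hr2]
        linarith
      have h5 : (r₂ - q₂)/r₂ = 1 - q₂/r₂ := by field_simp
      linarith [h5 ▸ h4]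
  have hminiff : (1 - min (q₁/r₁) (q₂/r₂) < a) ↔ (-1 < b1 ∧ -1 < b2) := by
    rw [← hineq1, ← hineq2]
    constructor
    · intro h
      constructor
      · linarith [min_le_left (q₁/r₁) (q₂/r₂)]
      · linarith [min_le_right (q₁/r₁) (q₂/r₂)]
    · rintro ⟨h1', h2'⟩
      rcases le_total (q₁/r₁) (q₂/r₂) with hc | hc
      · rw [min_eq_left hc]; linarith
      · rw [min_eq_right hc]; linarith
  -- normalize the three averages
  have havg0 : ∀ t l : ℝ,
      avgR (Icc t (t+l)) (fun x =>
        (ENNReal.ofReal (|x| ^ (-a)) ^ (A⁻¹/q₁) * ENNReal.ofReal (|x| ^ (-a)) ^ (A⁻¹/q₂)) ^ E)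
      = avgR (Icc t (t+l)) (f b0) := by
    intro t l
    apply avg_congr
    intro x hx
    have habs : (0:ℝ) < |x| := abs_pos.mpr hx
    rw [ofReal_rpow_rpow hx, ofReal_rpow_rpow hx,
      ← ENNReal.ofReal_mul (Real.rpow_nonneg (abs_nonneg x) _),
      ← Real.rpow_add habs, ofReal_rpow_rpow hx]
    unfold f
    congr 1
    have hc : A⁻¹/q₁ + A⁻¹/q₂ = 1 := by
      have h0 : A⁻¹/q₁ + A⁻¹/q₂ = A⁻¹ * (q₁⁻¹ + q₂⁻¹) := by
        rw [div_eq_mul_inv, div_eq_mul_inv, mul_add]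
      rw [h0, ← hAdef, inv_mul_cancel₀ hA.ne']
    congr 1
    calc (-a * (A⁻¹/q₁) + -a * (A⁻¹/q₂)) * E
        = -a * (A⁻¹/q₁ + A⁻¹/q₂) * E := by ring
      _ = b0 := by rw [hc, hb0def]; ring
  have havg1 : ∀ t l : ℝ,
      avgR (Icc t (t+l)) (fun x => ENNReal.ofReal (|x| ^ (-a)) ^ (r₁/(r₁-q₁)))
      = avgR (Icc t (t+l)) (f b1) := by
    intro t l
    apply avg_congr
    intro x hx
    rw [ofReal_rpow_rpow hx, ← hb1def]
    rfl
  have havg2 : ∀ t l : ℝ,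
      avgR (Icc t (t+l)) (fun x => ENNReal.ofReal (|x| ^ (-a)) ^ (r₂/(r₂-q₂)))
      = avgR (Icc t (t+l)) (f b2) := by
    intro t l
    apply avg_congr
    intro x hx
    rw [ofReal_rpow_rpow hx, ← hb2def]
    rfl
  have hrep : (⨆ (t : ℝ) (l : ℝ) (_ : 0 < l),
      (avgR (Icc t (t+l)) (fun x =>
        (ENNReal.ofReal (|x| ^ (-a)) ^ (A⁻¹/q₁) * ENNReal.ofReal (|x| ^ (-a)) ^ (A⁻¹/q₂)) ^ E))
        ^ (A - B) *
      (avgR (Icc t (t+l)) (fun x => ENNReal.ofReal (|x| ^ (-a)) ^ (r₁/(r₁-q₁)))) ^ (r₁⁻¹ - q₁⁻¹) *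
      (avgR (Icc t (t+l)) (fun x => ENNReal.ofReal (|x| ^ (-a)) ^ (r₂/(r₂-q₂)))) ^ (r₂⁻¹ - q₂⁻¹))
      = ⨆ (t : ℝ) (l : ℝ) (_ : 0 < l),
      (avgR (Icc t (t+l)) (f b0)) ^ (A - B) *
      (avgR (Icc t (t+l)) (f b1)) ^ (r₁⁻¹ - q₁⁻¹) *
      (avgR (Icc t (t+l)) (f b2)) ^ (r₂⁻¹ - q₂⁻¹) := by
    refine iSup_congr fun t => iSup_congr fun l => iSup_congr fun _ => ?_
    rw [havg0 t l, havg1 t l, havg2 t l]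
  rw [hrep]
  have hl01 : (0:ℝ) < 0 + 1 := by norm_num
  constructor
  · -- finiteness implies the bounds
    intro hfin
    by_contra hcon
    have hbad : b0 ≤ -1 ∨ b1 ≤ -1 ∨ b2 ≤ -1 := by
      rcases not_and_or.mp hcon with h | h
      · push_neg at h
        rcases le_total (q₁/r₁) (q₂/r₂) with hc | hc
        · right; left
          rw [min_eq_left hc] at h
          by_contra hb
          push_neg at hb
          exact absurd (hineq1.mpr hb) (not_lt.mpr h)
        · right; right
          rw [min_eq_right hc] at h
          by_contra hb
          push_neg at hb
          exact absurd (hineq2.mpr hb) (not_lt.mpr h)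
      · push_neg at h
        left
        by_contra hb
        push_neg at hb
        exact absurd (hineq0.mpr hb) (not_lt.mpr h)
    have havgL : ∀ b : ℝ, avgR (Icc 0 (0+1)) (f b) = Lam b 0 (0+1) := by
      intro b
      rw [avg_eq_Lam]
      simp
    have hLpos : ∀ b : ℝ, Lam b 0 (0+1) ≠ 0 := fun b => (Lam_pos b (by norm_num)).ne'
    have hFne : ∀ (b th : ℝ), 0 < th → (Lam b 0 (0+1)) ^ th ≠ 0 := by
      intro b th hth h
      rcases ENNReal.rpow_eq_zero_iff.mp h with ⟨h1, _⟩ | ⟨_, h2⟩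
      · exact hLpos b h1
      · linarith
    have hFtop : ∀ b : ℝ, b ≤ -1 → ∀ th : ℝ, 0 < th → (Lam b 0 (0+1)) ^ th = ⊤ := by
      intro b hb th hth
      rw [Lam_top hb (by norm_num : (0:ℝ) < 0 + 1)]
      exact ENNReal.top_rpow_of_pos hth
    have hterm : (avgR (Icc 0 (0+(1:ℝ))) (f b0)) ^ (A - B) *
        (avgR (Icc 0 (0+(1:ℝ))) (f b1)) ^ (r₁⁻¹ - q₁⁻¹) *
        (avgR (Icc 0 (0+(1:ℝ))) (f b2)) ^ (r₂⁻¹ - q₂⁻¹) = ⊤ := by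
      rw [havgL, havgL, havgL]
      rcases hbad with hb | hb | hb
      · rw [hFtop b0 hb _ hABpos, ENNReal.top_mul (hFne b1 _ hth1),
          ENNReal.top_mul (hFne b2 _ hth2)]
      · rw [hFtop b1 hb _ hth1, ENNReal.mul_top (hFne b0 _ hABpos),
          ENNReal.top_mul (hFne b2 _ hth2)]
      · rw [hFtop b2 hb _ hth2,
          ENNReal.mul_top (mul_ne_zero (hFne b0 _ hABpos) (hFne b1 _ hth1))]
    have hle : (⊤:ℝ≥0∞) ≤ ⨆ (t : ℝ) (l : ℝ) (_ : 0 < l),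
        (avgR (Icc t (t+l)) (f b0)) ^ (A - B) *
        (avgR (Icc t (t+l)) (f b1)) ^ (r₁⁻¹ - q₁⁻¹) *
        (avgR (Icc t (t+l)) (f b2)) ^ (r₂⁻¹ - q₂⁻¹) := by
      refine le_iSup_of_le 0 (le_iSup_of_le 1 (le_iSup_of_le one_pos ?_))
      rw [hterm]
    exact absurd (lt_of_le_of_lt hle hfin) (lt_irrefl ⊤)
  · rintro ⟨ha1, ha2⟩
    have hb0 : -1 < b0 := hineq0.mp ha2
    obtain ⟨hb1, hb2⟩ := hminiff.mp ha1
    refine lt_of_le_of_lt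
      (iSup_le fun t => iSup_le fun l => iSup_le fun hl => ?_)
      (ENNReal.ofReal_lt_top :
        ENNReal.ofReal ((Cb b0)^(A-B) * (Cb b1)^(r₁⁻¹-q₁⁻¹) * (Cb b2)^(r₂⁻¹-q₂⁻¹)) < ⊤)
    have hR : (0:ℝ) < |t| + l := by linarith [abs_nonneg t]
    have hbound : ∀ b th : ℝ, -1 < b → 0 ≤ th →
        (avgR (Icc t (t+l)) (f b)) ^ th ≤
          ENNReal.ofReal ((Cb b)^th * (|t|+l)^(b*th)) := by
      intro b th hb hth
      have hpos : (0:ℝ) < Cb b * (|t|+l)^b :=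
        mul_pos (Cb_pos hb) (Real.rpow_pos_of_pos hR b)
      refine le_trans (ENNReal.rpow_le_rpow (avg_le hb hl) hth) ?_
      rw [ENNReal.ofReal_rpow_of_pos hpos]
      refine ENNReal.ofReal_le_ofReal (le_of_eq ?_)
      rw [Real.mul_rpow (Cb_pos hb).le (Real.rpow_nonneg hR.le b),
        ← Real.rpow_mul hR.le]
    calc (avgR (Icc t (t+l)) (f b0)) ^ (A - B) *
        (avgR (Icc t (t+l)) (f b1)) ^ (r₁⁻¹ - q₁⁻¹) *
        (avgR (Icc t (t+l)) (f b2)) ^ (r₂⁻¹ - q₂⁻¹)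
        ≤ ENNReal.ofReal ((Cb b0)^(A-B) * (|t|+l)^(b0*(A-B))) *
          ENNReal.ofReal ((Cb b1)^(r₁⁻¹-q₁⁻¹) * (|t|+l)^(b1*(r₁⁻¹-q₁⁻¹))) *
          ENNReal.ofReal ((Cb b2)^(r₂⁻¹-q₂⁻¹) * (|t|+l)^(b2*(r₂⁻¹-q₂⁻¹))) :=
        mul_le_mul' (mul_le_mul' (hbound b0 _ hb0 hABpos.le) (hbound b1 _ hb1 hth1.le))
          (hbound b2 _ hb2 hth2.le)
      _ = ENNReal.ofReal (((Cb b0)^(A-B) * (|t|+l)^(b0*(A-B))) *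
          ((Cb b1)^(r₁⁻¹-q₁⁻¹) * (|t|+l)^(b1*(r₁⁻¹-q₁⁻¹))) *
          ((Cb b2)^(r₂⁻¹-q₂⁻¹) * (|t|+l)^(b2*(r₂⁻¹-q₂⁻¹)))) := by
          have hn0 : (0:ℝ) ≤ (Cb b0)^(A-B) * (|t|+l)^(b0*(A-B)) :=
            mul_nonneg (Real.rpow_nonneg (Cb_pos hb0).le _) (Real.rpow_nonneg hR.le _)
          have hn1 : (0:ℝ) ≤ (Cb b1)^(r₁⁻¹-q₁⁻¹) * (|t|+l)^(b1*(r₁⁻¹-q₁⁻¹)) :=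
            mul_nonneg (Real.rpow_nonneg (Cb_pos hb1).le _) (Real.rpow_nonneg hR.le _)
          rw [← ENNReal.ofReal_mul hn0, ← ENNReal.ofReal_mul (mul_nonneg hn0 hn1)]
      _ ≤ ENNReal.ofReal ((Cb b0)^(A-B) * (Cb b1)^(r₁⁻¹-q₁⁻¹) * (Cb b2)^(r₂⁻¹-q₂⁻¹)) := by
          refine ENNReal.ofReal_le_ofReal (le_of_eq ?_)
          have hP : (|t|+l)^(b0*(A-B)) * (|t|+l)^(b1*(r₁⁻¹-q₁⁻¹)) *
              (|t|+l)^(b2*(r₂⁻¹-q₂⁻¹)) = 1 := by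
            rw [← Real.rpow_add hR, ← Real.rpow_add hR, hsum, Real.rpow_zero]
          calc ((Cb b0)^(A-B) * (|t|+l)^(b0*(A-B))) *
              ((Cb b1)^(r₁⁻¹-q₁⁻¹) * (|t|+l)^(b1*(r₁⁻¹-q₁⁻¹))) *
              ((Cb b2)^(r₂⁻¹-q₂⁻¹) * (|t|+l)^(b2*(r₂⁻¹-q₂⁻¹)))
              = ((Cb b0)^(A-B) * (Cb b1)^(r₁⁻¹-q₁⁻¹) * (Cb b2)^(r₂⁻¹-q₂⁻¹)) *
                ((|t|+l)^(b0*(A-B)) * (|t|+l)^(b1*(r₁⁻¹-q₁⁻¹)) *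
                 (|t|+l)^(b2*(r₂⁻¹-q₂⁻¹))) := by ring
            _ = (Cb b0)^(A-B) * (Cb b1)^(r₁⁻¹-q₁⁻¹) * (Cb b2)^(r₂⁻¹-q₂⁻¹) := by
                rw [hP, mul_one]
end
end
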